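/- arXiv:1901.09047 — 2 statements merged into one kernel-verified Lean document; each statement's English description precedes it below -/
import Mathlib

section
/- Suppose in each of T boosting rounds the weak rule h_t has weighted edge at least γ > 0 under the current AdaBoost distribution, and α_t = (1/2)·ln((1/2+γ)/(1/2−γ)). Then the empirical exponential loss after T rounds satisfies (1/n)∑_i exp(−S_T(x_i)y_i) ≤ (1 − 4γ^2)^{T/2}, hence the training error of sign(S_T) is at most (1 − 4γ^2)^{T/2}. -/
open Finset

theorem adaboost_training_error_bound
    {X : Type*} (n T : ℕ) (hn : 0 < n)
    (x : Fin n → X) (y : Fin n → ℝ) (hy : ∀ i, y i = 1 ∨ y i = -1)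
    (h : ℕ → X → ℝ) (hh : ∀ t a, h t a = 1 ∨ h t a = -1)
    (γ : ℝ) (hγ0 : 0 < γ) (hγ1 : γ < 1 / 2)
    (α : ℝ) (hα : α = (1 / 2) * Real.log ((1 / 2 + γ) / (1 / 2 - γ)))
    (S : ℕ → Fin n → ℝ)
    (hS : ∀ t i, S t i = ∑ s ∈ Finset.range t, α * h s (x i))
    (hedge : ∀ t < T,
      (∑ i, Real.exp (-(S t i * y i)) * h t (x i) * y i)
        / (∑ i, Real.exp (-(S t i * y i))) ≥ 2 * γ) :
    (1 / n : ℝ) * ∑ i, Real.exp (-(S T i * y i))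
        ≤ (1 - 4 * γ ^ 2) ^ ((T : ℝ) / 2) ∧
    (1 / n : ℝ) * (Finset.univ.filter (fun i => S T i * y i ≤ 0)).card
        ≤ (1 - 4 * γ ^ 2) ^ ((T : ℝ) / 2) := by
  haveI : Nonempty (Fin n) := ⟨⟨0, hn⟩⟩
  set Z : ℕ → ℝ := fun t => ∑ i, Real.exp (-(S t i * y i)) with hZdef
  have hZpos : ∀ t, 0 < Z t := fun t =>
    Finset.sum_pos (fun i _ => Real.exp_pos _) Finset.univ_nonempty
  have h4 : 0 < 1 - 4 * γ ^ 2 := by nlinarith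
  set c : ℝ := Real.sqrt (1 - 4 * γ ^ 2) with hc
  have hcpos : 0 < c := Real.sqrt_pos.2 h4
  obtain ⟨A, hAdef⟩ : ∃ A, Real.exp α = A := ⟨_, rfl⟩
  have hden : 0 < 1 / 2 - γ := by linarith
  have hnum : 0 < 1 / 2 + γ := by linarith
  have hq1 : 1 < (1 / 2 + γ) / (1 / 2 - γ) := by
    rw [lt_div_iff₀ hden]; linarith
  have hA1 : 1 < A := by
    rw [← hAdef, Real.one_lt_exp_iff, hα]
    have := Real.log_pos hq1
    linarith
  have hA0 : 0 < A := by linarith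
  have hAsq : A ^ 2 = (1 / 2 + γ) / (1 / 2 - γ) := by
    rw [← hAdef, sq, ← Real.exp_add, hα,
      show (1 / 2) * Real.log ((1 / 2 + γ) / (1 / 2 - γ))
        + (1 / 2) * Real.log ((1 / 2 + γ) / (1 / 2 - γ))
        = Real.log ((1 / 2 + γ) / (1 / 2 - γ)) by ring,
      Real.exp_log (div_pos hnum hden)]
  have hcA1 : (1 - 2 * γ) * A = c := by
    have hnn : 0 ≤ (1 - 2 * γ) * A := by
      apply mul_nonneg (by linarith) hA0.le
    have hsq : ((1 - 2 * γ) * A) ^ 2 = 1 - 4 * γ ^ 2 := by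
      rw [mul_pow, hAsq, ← mul_div_assoc, div_eq_iff hden.ne']
      ring
    rw [hc, ← hsq, Real.sqrt_sq hnn]
  have hcA2 : (1 + 2 * γ) * A⁻¹ = c := by
    have hnn : 0 ≤ (1 + 2 * γ) * A⁻¹ := by positivity
    have hsq : ((1 + 2 * γ) * A⁻¹) ^ 2 = 1 - 4 * γ ^ 2 := by
      rw [mul_pow, inv_pow, hAsq, inv_div, ← mul_div_assoc, div_eq_iff hnum.ne']
      ring
    rw [hc, ← hsq, Real.sqrt_sq hnn]
  have hfac : (A + A⁻¹) / 2 - γ * (A - A⁻¹) = c := by linarith [hcA1, hcA2]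
  -- key step
  have hstep : ∀ t, t < T → Z (t + 1) ≤ c * Z t := by
    intro t ht
    have hSsucc : ∀ i, S (t + 1) i = S t i + α * h t (x i) := fun i => by
      rw [hS, hS, Finset.sum_range_succ]
    have hexp : ∀ i, Real.exp (-(S (t + 1) i * y i)) =
        Real.exp (-(S t i * y i))
          * ((A + A⁻¹) / 2 - (h t (x i) * y i) * ((A - A⁻¹) / 2)) := by
      intro i
      have hsplit : Real.exp (-(S (t + 1) i * y i))
          = Real.exp (-(S t i * y i)) * Real.exp (-(α * (h t (x i) * y i))) := by
        rw [hSsucc i, ← Real.exp_add]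
        congr 1
        ring
      have hu : h t (x i) * y i = 1 ∨ h t (x i) * y i = -1 := by
        rcases hh t (x i) with h1 | h1 <;> rcases hy i with h2 | h2 <;>
          rw [h1, h2] <;> norm_num
      rcases hu with hu | hu <;> rw [hsplit, hu]
      · rw [mul_one, Real.exp_neg α, hAdef]
        ring
      · rw [show -(α * (-1 : ℝ)) = α by ring, hAdef]
        ring
    set W : ℝ := ∑ i, Real.exp (-(S t i * y i)) * h t (x i) * y i with hWdef
    have hZsucc : Z (t + 1) = (A + A⁻¹) / 2 * Z t - (A - A⁻¹) / 2 * W := by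
      simp only [hZdef, hWdef]
      rw [Finset.sum_congr rfl (fun i _ => hexp i),
        Finset.mul_sum, Finset.mul_sum, ← Finset.sum_sub_distrib]
      exact Finset.sum_congr rfl fun i _ => by ring
    have hW : 2 * γ * Z t ≤ W := by
      have he := hedge t ht
      rw [ge_iff_le, le_div_iff₀ (hZpos t)] at he
      linarith
    have hpos : 0 ≤ (A - A⁻¹) / 2 := by
      have : A⁻¹ < 1 := inv_lt_one_of_one_lt₀ hA1
      linarith
    have hmul := mul_le_mul_of_nonneg_left hW hpos
    calc Z (t + 1) = (A + A⁻¹) / 2 * Z t - (A - A⁻¹) / 2 * W := hZsucc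
      _ ≤ (A + A⁻¹) / 2 * Z t - (A - A⁻¹) / 2 * (2 * γ * Z t) := by linarith
      _ = ((A + A⁻¹) / 2 - γ * (A - A⁻¹)) * Z t := by ring
      _ = c * Z t := by rw [hfac]
  -- induction
  have hind : ∀ t, t ≤ T → Z t ≤ n * c ^ t := by
    intro t
    induction t with
    | zero =>
      intro _
      have hZ0 : Z 0 = n := by
        have h0 : ∀ i : Fin n, Real.exp (-(S 0 i * y i)) = 1 := by
          intro i
          rw [hS]
          simp
        simp only [hZdef]
        rw [Finset.sum_congr rfl fun i _ => h0 i]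
        simp
      rw [hZ0, pow_zero, mul_one]
    | succ t ih =>
      intro hle
      have ht : t < T := lt_of_lt_of_le (Nat.lt_succ_self t) hle
      calc Z (t + 1) ≤ c * Z t := hstep t ht
        _ ≤ c * ((n : ℝ) * c ^ t) := mul_le_mul_of_nonneg_left (ih ht.le) hcpos.le
        _ = (n : ℝ) * c ^ (t + 1) := by ring
  have hbound : Z T ≤ n * c ^ T := hind T le_rfl
  have hnpos : (0 : ℝ) < n := Nat.cast_pos.2 hn
  have hcT : (1 - 4 * γ ^ 2) ^ ((T : ℝ) / 2) = c ^ T := by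
    rw [hc, Real.sqrt_eq_rpow, ← Real.rpow_natCast ((1 - 4 * γ ^ 2) ^ ((1 : ℝ) / 2)) T,
      ← Real.rpow_mul h4.le]
    congr 1
    ring
  have hfinal : (1 / n : ℝ) * Z T ≤ (1 - 4 * γ ^ 2) ^ ((T : ℝ) / 2) := by
    rw [hcT]
    calc (1 / n : ℝ) * Z T ≤ (1 / n : ℝ) * ((n : ℝ) * c ^ T) := by
          apply mul_le_mul_of_nonneg_left hbound
          positivity
      _ = c ^ T := by field_simp
  refine ⟨hfinal, ?_⟩
  have hcard : ((Finset.univ.filter (fun i => S T i * y i ≤ 0)).card : ℝ) ≤ Z T := by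
    calc ((Finset.univ.filter (fun i => S T i * y i ≤ 0)).card : ℝ)
        = ∑ _i ∈ Finset.univ.filter (fun i => S T i * y i ≤ 0), (1 : ℝ) := by simp
      _ ≤ ∑ i ∈ Finset.univ.filter (fun i => S T i * y i ≤ 0),
            Real.exp (-(S T i * y i)) := by
          apply Finset.sum_le_sum
          intro i hi
          have := (Finset.mem_filter.1 hi).2
          exact Real.one_le_exp (by linarith)
      _ ≤ Z T := Finset.sum_le_sum_of_subset_of_nonneg (Finset.filter_subset _ _)
            (fun i _ _ => (Real.exp_pos _).le)
  calc (1 / n : ℝ) * ((Finset.univ.filter (fun i => S T i * y i ≤ 0)).card : ℝ)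
      ≤ (1 / n : ℝ) * Z T := by
        apply mul_le_mul_of_nonneg_left hcard
        positivity
    _ ≤ (1 - 4 * γ ^ 2) ^ ((T : ℝ) / 2) := hfinal
end

section
/- Minimal-variance (systematic) resampling with expected counts n·p_i produces counts N_i ∈ {⌊n·p_i⌋, ⌈n·p_i⌉} with E[N_i] = n·p_i; in particular Var(N_i) ≤ 1/4 for each i. -/
/-!
Put `c = ∑_{l<i} p_l`. The pointer `u + j/n` lies in `[c, c + p_i)` iff
`⌈n c - n u⌉ ≤ j < ⌈n (c + p_i) - n u⌉`, and since `0 ≤ n u < 1` every such `j` lies in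
`[0, n)`. So `N_i` is a difference of two ceilings, which is always `⌊n p_i⌋` or `⌈n p_i⌉`.
As `n u` is uniform on `[0, 1)`, the ceiling `⌈c' - n u⌉` has mean `c'`, whence `E N_i = n p_i`;
a variable carried by two adjacent integers has variance at most `1/4`.
-/

open MeasureTheory ProbabilityTheory

lemma Finset.sum_filter_lt_add_le_sum {ι M : Type*} [Fintype ι] [Preorder ι]
    [AddCommMonoid M] [PartialOrder M] [IsOrderedAddMonoid M]
    {f : ι → M} (hf : ∀ l, 0 ≤ f l) (i : ι) [DecidablePred fun l : ι => l < i] :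
    ∑ l ∈ Finset.univ.filter (fun l => l < i), f l + f i ≤ ∑ l, f l := by
  classical
  rw [add_comm, ← Finset.sum_insert (by simp)]
  exact Finset.sum_le_sum_of_subset_of_nonneg (Finset.subset_univ _) fun l _ _ => hf l

lemma Int.ceil_add_sub_ceil_eq_floor_or_ceil {R : Type*} [Ring R] [LinearOrder R]
    [IsStrictOrderedRing R] [FloorRing R] (r t : R) :
    ⌈r + t⌉ - ⌈r⌉ = ⌊t⌋ ∨ ⌈r + t⌉ - ⌈r⌉ = ⌈t⌉ := by
  have h_lower : ⌈r⌉ + ⌊t⌋ ≤ ⌈r + t⌉ := by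
    rw [← Int.ceil_add_intCast]
    exact Int.ceil_le_ceil (add_le_add_right (Int.floor_le t) r)
  have h_upper := Int.ceil_add_le r t
  have h_gap := Int.ceil_le_floor_add_one t
  omega

lemma variance_le_one_quarter_of_mem_Icc {Ω : Type*} [MeasurableSpace Ω] {P : Measure Ω}
    [IsProbabilityMeasure P] {X : Ω → ℝ} (hX : AEMeasurable X P) (m : ℝ)
    (h : ∀ᵐ ω ∂P, X ω ∈ Set.Icc m (m + 1)) :
    variance X P ≤ 1 / 4 :=
  (variance_le_sq_of_bounded h hX).trans_eq (by ring)

noncomputable def gridCount (n : ℕ) (a b x : ℝ) : ℕ :=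
  open Classical in
  ((Finset.range n).filter (fun j : ℕ => a ≤ x + (j : ℝ) / n ∧ x + (j : ℝ) / n < b)).card

lemma gridCount_eq_ceil_sub_ceil {n : ℕ} (hn : 0 < n) {a b x : ℝ} (ha : 0 ≤ a) (hab : a ≤ b)
    (hb : b ≤ 1) (hx : x ∈ Set.Ico (0 : ℝ) (1 / n)) :
    (gridCount n a b x : ℤ) = ⌈n * b - n * x⌉ - ⌈n * a - n * x⌉ := by
  have hn' : (0 : ℝ) < n := by exact_mod_cast hn
  have hnx : n * x < 1 := by
    have := (lt_div_iff₀ hn').mp hx.2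
    linarith
  have grid_le_iff (c y : ℝ) : c ≤ x + y / n ↔ n * c - n * x ≤ y := by
    rw [← sub_le_iff_le_add', le_div_iff₀ hn']
    constructor <;> intro h <;> linarith
  set A := ⌈n * a - n * x⌉
  set B := ⌈n * b - n * x⌉
  have hA : 0 ≤ A := Int.ceil_nonneg_of_neg_one_lt (by nlinarith [hx.1])
  have hB : B ≤ n := Int.ceil_le.mpr (by push_cast; nlinarith [hx.1])
  have hAB : A ≤ B := Int.ceil_le_ceil (by nlinarith)
  have hset : (Finset.range n).filter
      (fun j : ℕ => a ≤ x + (j : ℝ) / n ∧ x + (j : ℝ) / n < b) = Finset.Ico A.toNat B.toNat := by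
    ext j
    simp only [Finset.mem_filter, Finset.mem_range, Finset.mem_Ico, ← not_le, grid_le_iff]
    rw [← Int.cast_natCast (R := ℝ) j, ← Int.ceil_le, ← Int.ceil_le]
    omega
  rw [gridCount, hset, Nat.card_Ico]
  omega

lemma gridCount_eq_floor_or_ceil {n : ℕ} (hn : 0 < n) {a d x : ℝ} (ha : 0 ≤ a) (hd : 0 ≤ d)
    (had : a + d ≤ 1) (hx : x ∈ Set.Ico (0 : ℝ) (1 / n)) :
    gridCount n a (a + d) x = ⌊n * d⌋₊ ∨ gridCount n a (a + d) x = ⌈n * d⌉₊ := by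
  have hnd : 0 ≤ (n : ℝ) * d := by positivity
  have h := gridCount_eq_ceil_sub_ceil hn ha (le_add_of_nonneg_right hd) had hx
  rw [show (n : ℝ) * (a + d) - n * x = (n * a - n * x) + n * d by ring] at h
  have hfloor := Int.natCast_floor_eq_floor hnd
  have hceil := Int.natCast_ceil_eq_ceil hnd
  rcases Int.ceil_add_sub_ceil_eq_floor_or_ceil (n * a - n * x) (n * d) with h' | h' <;> omega

lemma measurable_gridCount (n : ℕ) (a b : ℝ) : Measurable fun x => (gridCount n a b x : ℝ) := by
  classical
  simp only [gridCount, Finset.card_filter, Nat.cast_sum, Nat.cast_ite, Nat.cast_one, Nat.cast_zero]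
  refine Finset.measurable_sum _ fun j _ => Measurable.ite ?_ measurable_const measurable_const
  exact (measurableSet_le measurable_const (measurable_id.add_const _)).inter
    (measurableSet_lt (measurable_id.add_const _) measurable_const)

lemma setIntegral_ceil_sub_mul {n : ℕ} (hn : 0 < n) (c : ℝ) :
    IntegrableOn (fun x : ℝ => (⌈c - n * x⌉ : ℝ)) (Set.Ico 0 (1 / n)) ∧
    ∫ x in Set.Ico (0 : ℝ) (1 / n), (⌈c - n * x⌉ : ℝ) = c / n := by
  have hn' : (0 : ℝ) < n := by exact_mod_cast hn
  set m := ⌈c⌉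
  -- `⌈c - n x⌉` drops from `m` to `m - 1` at `x = s`
  set s := (c - m + 1) / n
  have hns : n * s = c - m + 1 := by simp only [s]; field_simp
  have hcm := Int.ceil_eq_iff.mp (rfl : ⌈c⌉ = m)
  have hs0 : 0 ≤ s := div_nonneg (by linarith) hn'.le
  have hs1 : s ≤ 1 / n := div_le_div_of_nonneg_right (by linarith) hn'.le
  have on_left : Set.EqOn (fun x : ℝ => (⌈c - n * x⌉ : ℝ)) (fun _ => (m : ℝ)) (Set.Ico 0 s) := by
    intro x hx
    have : ⌈c - n * x⌉ = m := Int.ceil_eq_iff.mpr ⟨by nlinarith [hx.2], by nlinarith [hx.1]⟩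
    simp [this]
  have on_right : Set.EqOn (fun x : ℝ => (⌈c - n * x⌉ : ℝ)) (fun _ => (m - 1 : ℝ))
      (Set.Ico s (1 / n)) := by
    intro x hx
    have hnx : n * x < 1 := by have := (lt_div_iff₀ hn').mp hx.2; linarith
    have : ⌈c - n * x⌉ = m - 1 :=
      Int.ceil_eq_iff.mpr ⟨by push_cast; nlinarith, by push_cast; nlinarith [hx.1]⟩
    simp [this]
  have int_left : IntegrableOn (fun x : ℝ => (⌈c - n * x⌉ : ℝ)) (Set.Ico 0 s) :=
    (integrableOn_congr_fun on_left measurableSet_Ico).mpr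
      (integrableOn_const measure_Ico_lt_top.ne)
  have int_right : IntegrableOn (fun x : ℝ => (⌈c - n * x⌉ : ℝ)) (Set.Ico s (1 / n)) :=
    (integrableOn_congr_fun on_right measurableSet_Ico).mpr
      (integrableOn_const measure_Ico_lt_top.ne)
  rw [← Set.Ico_union_Ico_eq_Ico hs0 hs1]
  refine ⟨int_left.union int_right, ?_⟩
  rw [setIntegral_union Set.Ico_disjoint_Ico_same measurableSet_Ico int_left int_right,
    setIntegral_congr_fun measurableSet_Ico on_left, setIntegral_congr_fun measurableSet_Ico on_right,
    setIntegral_const, setIntegral_const, Real.volume_real_Ico_of_le hs0,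
    Real.volume_real_Ico_of_le hs1, smul_eq_mul, smul_eq_mul]
  field_simp
  linarith

lemma setIntegral_gridCount {n : ℕ} (hn : 0 < n) {a b : ℝ} (ha : 0 ≤ a) (hab : a ≤ b)
    (hb : b ≤ 1) :
    ∫ x in Set.Ico (0 : ℝ) (1 / n), (gridCount n a b x : ℝ) = b - a := by
  have hceil : Set.EqOn (fun x => (gridCount n a b x : ℝ))
      (fun x => (⌈n * b - n * x⌉ : ℝ) - (⌈n * a - n * x⌉ : ℝ)) (Set.Ico 0 (1 / n)) := fun x hx => by
    simp only [← Int.cast_natCast (R := ℝ), gridCount_eq_ceil_sub_ceil hn ha hab hb hx, Int.cast_sub]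
  obtain ⟨int_b, integral_b⟩ := setIntegral_ceil_sub_mul hn (n * b)
  obtain ⟨int_a, integral_a⟩ := setIntegral_ceil_sub_mul hn (n * a)
  rw [setIntegral_congr_fun measurableSet_Ico hceil, integral_sub int_b int_a, integral_b,
    integral_a]
  field_simp

open Classical in
theorem systematic_resampling_counts
    {Ω : Type*} [MeasurableSpace Ω] (P : Measure Ω) [IsProbabilityMeasure P]
    (K n : ℕ) (hn : 0 < n) (p : Fin K → ℝ) (hp : ∀ i, 0 ≤ p i)
    (hsum : ∑ i, p i = 1)
    (u : Ω → ℝ) (humeas : Measurable u)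
    (hurange : ∀ ω, u ω ∈ Set.Ico (0 : ℝ) (1 / n))
    (hulaw : Measure.map u P = (n : ENNReal) • volume.restrict (Set.Ico (0 : ℝ) (1 / n)))
    (N : Fin K → Ω → ℕ)
    (hN : ∀ i ω, N i ω =
      ((Finset.range n).filter (fun j : ℕ =>
        (∑ l ∈ Finset.univ.filter (fun l => l < i), p l) ≤ u ω + (j : ℝ) / n ∧
        u ω + (j : ℝ) / n <
          (∑ l ∈ Finset.univ.filter (fun l => l < i), p l) + p i)).card) :
    (∀ i ω, N i ω = ⌊(n : ℝ) * p i⌋₊ ∨ N i ω = ⌈(n : ℝ) * p i⌉₊) ∧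
    (∀ i, ∫ ω, (N i ω : ℝ) ∂P = n * p i) ∧
    (∀ i, variance (fun ω => (N i ω : ℝ)) P ≤ 1 / 4) := by
  set a : Fin K → ℝ := fun i => ∑ l ∈ Finset.univ.filter (fun l => l < i), p l
  have ha : ∀ i, 0 ≤ a i := fun i => Finset.sum_nonneg fun l _ => hp l
  have hap : ∀ i, a i + p i ≤ 1 := fun i => hsum ▸ Finset.sum_filter_lt_add_le_sum hp i
  have hN_grid : ∀ i, (fun ω => (N i ω : ℝ)) = fun ω => (gridCount n (a i) (a i + p i) (u ω) : ℝ) :=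
    fun i => funext fun ω => congrArg Nat.cast (hN i ω)
  have hcount : ∀ i ω, N i ω = ⌊(n : ℝ) * p i⌋₊ ∨ N i ω = ⌈(n : ℝ) * p i⌉₊ := fun i ω =>
    hN i ω ▸ gridCount_eq_floor_or_ceil hn (ha i) (hp i) (hap i) (hurange ω)
  refine ⟨hcount, fun i => ?_, fun i => ?_⟩
  · rw [hN_grid i, ← integral_map humeas.aemeasurable
      (measurable_gridCount n _ _).aestronglyMeasurable, hulaw, integral_smul_measure,
      setIntegral_gridCount hn (ha i) (le_add_of_nonneg_right (hp i)) (hap i)]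
    simp
  · refine variance_le_one_quarter_of_mem_Icc
      (hN_grid i ▸ ((measurable_gridCount n _ _).comp humeas).aemeasurable)
      ⌊(n : ℝ) * p i⌋₊ (Filter.Eventually.of_forall fun ω => ?_)
    have hfloor := Nat.floor_le_ceil ((n : ℝ) * p i)
    have hceil := Nat.ceil_le_floor_add_one ((n : ℝ) * p i)
    rw [Set.mem_Icc]
    norm_cast
    rcases hcount i ω with h | h <;> omega
end
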